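/- Covering-number bound for the induced Bellman-loss function class: fix h∈[H] and a reward function r with values in [−R_max,R_max]. For z=(s,a,ρ,s')∈S×A×[−R_max,R_max]×S, f,f'∈F, and a policy π, define g^π_{f,f'}(z) = (f_h(s,a) − ρ − f'_{h+1}(s',π_{h+1}))² − ((T^π_{h,r}f'_{h+1})(s,a) − ρ − f'_{h+1}(s',π_{h+1}))². Then for every ε,β>0, the sup-norm covering number at scale εβ/5 of the class G_{F,Π} = {g^π_{f,f'} : f,f'∈F, π∈Π} satisfies N∞(εβ/5, G_{F,Π}) ≤ (N∞(εβ/(140·H·R_max), F))² · N∞,1(εβ/(140·H²·R_max²), Π). -/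

import Mathlib

open scoped BigOperators Classical

noncomputable section

namespace VCGRL

variable {S A : Type*}

/-- Time-indexed stochastic policy: `π h s a` is the probability of action `a`
in state `s` at step `h`. -/
abbrev Pol (S A : Type*) := ℕ → S → A → ℝ

/-- Time-indexed transition kernel. -/
abbrev Ker (S A : Type*) := ℕ → S → A → S → ℝ

/-- Time-indexed reward function. -/
abbrev Rew (S A : Type*) := ℕ → S → A → ℝ

section Defs

variable [Fintype S] [Fintype A]

def IsPolicy (π : Pol S A) : Prop :=
  (∀ h s a, 0 ≤ π h s a) ∧ ∀ h s, ∑ a, π h s a = 1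

def IsKernel (P : Ker S A) : Prop :=
  (∀ h s a s', 0 ≤ P h s a s') ∧ ∀ h s a, ∑ s', P h s a s' = 1

/-- `g(s, π_h) = E_{a ∼ π_h(·|s)}[g(s,a)]`. -/
def expA (π : Pol S A) (h : ℕ) (g : S → A → ℝ) (s : S) : ℝ := ∑ a, π h s a * g s a

/-- Q-value with `m` steps remaining, starting at step `h`. -/
def Qaux (P : Ker S A) (π : Pol S A) (r : Rew S A) : ℕ → ℕ → S → A → ℝ
  | 0, _, _, _ => 0
  | m + 1, h, s, a =>
      r h s a + ∑ s', P h s a s' * expA π (h + 1) (Qaux P π r m (h + 1)) s'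

/-- `Q_h^π(·,·;r)` for an episodic MDP of horizon `H`. -/
def Qfun (P : Ker S A) (π : Pol S A) (r : Rew S A) (H h : ℕ) : S → A → ℝ :=
  Qaux P π r (H + 1 - h) h

/-- State value `V_h^π(·;r)`. -/
def Vfun (P : Ker S A) (π : Pol S A) (r : Rew S A) (H h : ℕ) (s : S) : ℝ :=
  expA π h (Qfun P π r H h) s

/-- `V₁^π(s₀;r)`. -/
def V1 (P : Ker S A) (π : Pol S A) (r : Rew S A) (H : ℕ) (s₀ : S) : ℝ :=
  Vfun P π r H 1 s₀

/-- `V₁*(s₀;r) = max_π V₁^π(s₀;r)`. -/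
def Vstar (P : Ker S A) (r : Rew S A) (H : ℕ) (s₀ : S) : ℝ :=
  ⨆ π : {π : Pol S A // IsPolicy π}, V1 P π.1 r H s₀

/-- Policy-specific Bellman evaluation operator `T^π_{h,r}`. -/
def bellman (P : Ker S A) (π : Pol S A) (r : Rew S A) (h : ℕ) (g : S → A → ℝ) :
    S → A → ℝ :=
  fun s a => r h s a + ∑ s', P h s a s' * expA π (h + 1) g s'

/-- State distribution at step `m + 1` when following `π` from `s₀`. -/
def visit (P : Ker S A) (π : Pol S A) (s₀ : S) : ℕ → S → ℝ
  | 0 => fun s => if s = s₀ then 1 else 0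
  | m + 1 => fun s' => ∑ s, ∑ a, visit P π s₀ m s * π (m + 1) s a * P (m + 1) s a s'

/-- `E_{d_π,h}[u(s,a)²]`: expected squared value of `u` under the state-action
visitation measure of `π` at step `h`. -/
def occSq (P : Ker S A) (π : Pol S A) (s₀ : S) (h : ℕ) (u : S → A → ℝ) : ℝ :=
  ∑ s, ∑ a, visit P π s₀ (h - 1) s * π h s a * u s a ^ 2

/-- `E_{μ_h}[‖u‖²]`: expected squared value of `u` under the data distribution `μ_h`. -/
def popSq (μ : ℕ → S × A × S → ℝ) (h : ℕ) (u : S → A → ℝ) : ℝ :=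
  ∑ x : S × A × S, μ h x * u x.1 x.2.1 ^ 2

def IsDataDist (μ : ℕ → S × A × S → ℝ) : Prop :=
  (∀ h x, 0 ≤ μ h x) ∧ ∀ h, ∑ x : S × A × S, μ h x = 1

/-- Membership in the function class `F = F₁ × F₂ × ⋯`. -/
def InClass (Fc : ℕ → Set (S → A → ℝ)) (f : ℕ → S → A → ℝ) : Prop := ∀ h, f h ∈ Fc h

/-- Boundedness of the function class: `F_h ⊆ S×A → [-(H-h+1)R, (H-h+1)R]` and
`F_{H+1} = {0}`. -/
def ClassBounded (H : ℕ) (Rmax : ℝ) (Fc : ℕ → Set (S → A → ℝ)) : Prop :=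
  (∀ h ∈ Finset.Icc 1 H, ∀ f ∈ Fc h, ∀ s a, |f s a| ≤ ((H : ℝ) - h + 1) * Rmax) ∧
    Fc (H + 1) = {fun _ _ => 0}

/-- Distribution-shift coefficient `C^π(π')` (from the visitation measure of `π'`
to the data distribution `μ`, with Bellman operators induced by `π`). -/
def distShift (P : Ker S A) (μ : ℕ → S × A × S → ℝ) (Fc : ℕ → Set (S → A → ℝ))
    (Rset : Set (Rew S A)) (H : ℕ) (s₀ : S) (π π' : Pol S A) : ℝ :=
  ⨆ f1 : {f : ℕ → S → A → ℝ // InClass Fc f},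
    ⨆ f2 : {f : ℕ → S → A → ℝ // InClass Fc f},
      ⨆ h ∈ Finset.Icc 1 H, ⨆ r : Rset,
        occSq P π' s₀ h (fun s a => f1.1 h s a - bellman P π r.1 h (f2.1 (h + 1)) s a) /
          popSq μ h (fun s a => f1.1 h s a - bellman P π r.1 h (f2.1 (h + 1)) s a)

end Defs

/-- An offline dataset of `K` transitions for each of the `H` steps. -/
abbrev Dataset (S A : Type*) (H K : ℕ) := Fin H → Fin K → S × A × S

section Data

variable [Fintype S] [Fintype A] [Nonempty S] [Nonempty A]

/-- Access the data of (1-based) step `h`. -/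
def dget {H K : ℕ} (D : Dataset S A H K) (h : ℕ) (τ : Fin K) : S × A × S :=
  if hh : h - 1 < H then D ⟨h - 1, hh⟩ τ else Classical.arbitrary _

/-- Empirical squared loss `L_{h,r}(u, f', π; D)`. -/
def empLoss {H K : ℕ} (r : Rew S A) (D : Dataset S A H K) (h : ℕ)
    (u f' : S → A → ℝ) (π : Pol S A) : ℝ :=
  (K : ℝ)⁻¹ * ∑ τ : Fin K,
    (u (dget D h τ).1 (dget D h τ).2.1 - r h (dget D h τ).1 (dget D h τ).2.1 -
      expA π (h + 1) f' (dget D h τ).2.2) ^ 2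

/-- Empirical Bellman error estimate `E_{h,r}(f, π; D)`. -/
def empBE {H K : ℕ} (Fc : ℕ → Set (S → A → ℝ)) (r : Rew S A) (D : Dataset S A H K)
    (h : ℕ) (f : ℕ → S → A → ℝ) (π : Pol S A) : ℝ :=
  empLoss r D h (f h) (f (h + 1)) π - ⨅ g ∈ Fc h, empLoss r D h g (f (h + 1)) π

/-- Probability of a set of datasets when, for each step `h`, the `K` transitions are
drawn i.i.d. from `μ_h`. -/
def dsProb {H K : ℕ} (μ : ℕ → S × A × S → ℝ) (E : Set (Dataset S A H K)) : ℝ :=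
  ∑ D : Dataset S A H K,
    if D ∈ E then ∏ h : Fin H, ∏ τ : Fin K, μ (h.1 + 1) (D h τ) else 0

/-- The good event `G(Π)`. -/
def goodEvent (H K : ℕ) (P : Ker S A) (μ : ℕ → S × A × S → ℝ)
    (Fc : ℕ → Set (S → A → ℝ)) (Rset : Set (Rew S A)) (PiC : Set (Pol S A))
    (εS : ℝ) : Set (Dataset S A H K) :=
  {D | ∀ h ∈ Finset.Icc 1 H, ∀ r ∈ Rset, ∀ π ∈ PiC, ∀ f f' : ℕ → S → A → ℝ,
    InClass Fc f → InClass Fc f' →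
    |popSq μ h (fun s a => f h s a - bellman P π r h (f' (h + 1)) s a) -
        empLoss r D h (f h) (f' (h + 1)) π +
        empLoss r D h (bellman P π r h (f' (h + 1))) (f' (h + 1)) π| ≤
      εS + 1 / 2 * popSq μ h fun s a => f h s a - bellman P π r h (f' (h + 1)) s a}

/-- Pessimistic regularized policy-evaluation objective. -/
def pessObj {H K : ℕ} (Fc : ℕ → Set (S → A → ℝ)) (r : Rew S A) (D : Dataset S A H K)
    (π : Pol S A) (lam : ℝ) (s₀ : S) (f : ℕ → S → A → ℝ) : ℝ :=
  expA π 1 (f 1) s₀ + lam * ∑ h ∈ Finset.Icc 1 H, empBE Fc r D h f π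

/-- Optimistic regularized policy-evaluation objective. -/
def optObj {H K : ℕ} (Fc : ℕ → Set (S → A → ℝ)) (r : Rew S A) (D : Dataset S A H K)
    (π : Pol S A) (lam : ℝ) (s₀ : S) (f : ℕ → S → A → ℝ) : ℝ :=
  -expA π 1 (f 1) s₀ + lam * ∑ h ∈ Finset.Icc 1 H, empBE Fc r D h f π

/-- `Q` is a pessimistic policy-evaluation output (minimizer of the pessimistic
objective over the function class). -/
def IsPessEval {H K : ℕ} (Fc : ℕ → Set (S → A → ℝ)) (r : Rew S A) (D : Dataset S A H K)
    (π : Pol S A) (lam : ℝ) (s₀ : S) (Q : ℕ → S → A → ℝ) : Prop :=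
  InClass Fc Q ∧ ∀ f, InClass Fc f → pessObj Fc r D π lam s₀ Q ≤ pessObj Fc r D π lam s₀ f

/-- `Q` is an optimistic policy-evaluation output. -/
def IsOptEval {H K : ℕ} (Fc : ℕ → Set (S → A → ℝ)) (r : Rew S A) (D : Dataset S A H K)
    (π : Pol S A) (lam : ℝ) (s₀ : S) (Q : ℕ → S → A → ℝ) : Prop :=
  InClass Fc Q ∧ ∀ f, InClass Fc f → optObj Fc r D π lam s₀ Q ≤ optObj Fc r D π lam s₀ f

/-- Pessimistic soft policy iteration: iterates `πt` and value estimates `Qt`. -/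
def IsSPIPess {H K : ℕ} (Fc : ℕ → Set (S → A → ℝ)) (r : Rew S A) (D : Dataset S A H K)
    (T : ℕ) (η lam : ℝ) (s₀ : S) (πt : ℕ → Pol S A) (Qt : ℕ → ℕ → S → A → ℝ) : Prop :=
  (∀ h s a, πt 1 h s a = (Fintype.card A : ℝ)⁻¹) ∧
  (∀ t ∈ Finset.Icc 1 T, IsPessEval Fc r D (πt t) lam s₀ (Qt t)) ∧
  ∀ t ∈ Finset.Icc 1 T, ∀ h s a,
    πt (t + 1) h s a =
      πt t h s a * Real.exp (η * Qt t h s a) /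
        ∑ a', πt t h s a' * Real.exp (η * Qt t h s a')

/-- Optimistic soft policy iteration. -/
def IsSPIOpt {H K : ℕ} (Fc : ℕ → Set (S → A → ℝ)) (r : Rew S A) (D : Dataset S A H K)
    (T : ℕ) (η lam : ℝ) (s₀ : S) (πt : ℕ → Pol S A) (Qt : ℕ → ℕ → S → A → ℝ) : Prop :=
  (∀ h s a, πt 1 h s a = (Fintype.card A : ℝ)⁻¹) ∧
  (∀ t ∈ Finset.Icc 1 T, IsOptEval Fc r D (πt t) lam s₀ (Qt t)) ∧
  ∀ t ∈ Finset.Icc 1 T, ∀ h s a,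
    πt (t + 1) h s a =
      πt t h s a * Real.exp (η * Qt t h s a) /
        ∑ a', πt t h s a' * Real.exp (η * Qt t h s a')

end Data

section Mix

variable [Fintype S] [Fintype A]

/-- The uniform mixture of the policies `πt 1, …, πt T` (as a Markov policy). -/
def mixPol (T : ℕ) (πt : ℕ → Pol S A) : Pol S A :=
  fun h s a => (T : ℝ)⁻¹ * ∑ t ∈ Finset.Icc 1 T, πt t h s a

/-- The value of the uniform mixture of the policies `πt 1, …, πt T`. -/
def mixV1 (P : Ker S A) (T : ℕ) (πt : ℕ → Pol S A) (r : Rew S A) (H : ℕ) (s₀ : S) : ℝ :=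
  (T : ℝ)⁻¹ * ∑ t ∈ Finset.Icc 1 T, V1 P (πt t) r H s₀

/-- Total reward `R = r₀ + ∑ᵢ rᵢ`. -/
def totalRew {n : ℕ} (r0 : Rew S A) (ra : Fin n → Rew S A) : Rew S A :=
  fun h s a => r0 h s a + ∑ i, ra i h s a

/-- Reward excluding agent `i` : `R₋ᵢ = r₀ + ∑_{j ≠ i} rⱼ`. -/
def negRew {n : ℕ} (r0 : Rew S A) (ra : Fin n → Rew S A) (i : Fin n) : Rew S A :=
  fun h s a => r0 h s a + ∑ j ∈ Finset.univ.erase i, ra j h s a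

/-- The set of reward functions of interest, `{R₋ᵢ}ᵢ ∪ {R}`. -/
def RewSet {n : ℕ} (r0 : Rew S A) (ra : Fin n → Rew S A) : Set (Rew S A) :=
  Set.range (negRew r0 ra) ∪ {totalRew r0 ra}

/-- Range condition on an agent's reward. -/
def AgentRewRange (H : ℕ) (r : Rew S A) : Prop :=
  ∀ h ∈ Finset.Icc 1 H, ∀ s a, 0 ≤ r h s a ∧ r h s a ≤ 1

/-- Range condition on the seller's reward. -/
def SellerRewRange (H n : ℕ) (Rmax : ℝ) (r : Rew S A) : Prop :=
  ∀ h ∈ Finset.Icc 1 H, ∀ s a, -Rmax ≤ r h s a ∧ r h s a ≤ -(n : ℝ) + Rmax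

end Mix

section Cover

variable [Fintype S] [Fintype A]

/-- ℓ∞ covering number of the function class `F`. -/
def coverF (H : ℕ) (Fc : ℕ → Set (S → A → ℝ)) (ε : ℝ) : ℕ :=
  sInf {N : ℕ | ∃ C : Finset (ℕ → S → A → ℝ), C.card = N ∧
    ∀ f : ℕ → S → A → ℝ, InClass Fc f →
      ∃ g ∈ C, ∀ h ∈ Finset.Icc 1 H, ∀ s a, |g h s a - f h s a| ≤ ε}

/-- ℓ∞,1 covering number of a policy class. -/
def coverPol (H : ℕ) (PiC : Set (Pol S A)) (ε : ℝ) : ℕ :=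
  sInf {N : ℕ | ∃ C : Finset (Pol S A), C.card = N ∧
    ∀ π ∈ PiC, ∃ π' ∈ C, ∀ h ∈ Finset.Icc 1 H, ∀ s, ∑ a, |π h s a - π' h s a| ≤ ε}

/-- The statistical error parameter `ε_S`. -/
def epsS (H K n : ℕ) (Rmax δ : ℝ) (Fc : ℕ → Set (S → A → ℝ)) (PiC : Set (Pol S A)) : ℝ :=
  5136 / K * (H : ℝ) ^ 4 * Rmax ^ 4 *
    Real.log (56 * n * H * coverF H Fc (19 * (H : ℝ) ^ 3 * Rmax ^ 3 / K) *
      coverPol H PiC (19 * (H : ℝ) ^ 4 * Rmax ^ 4 / K) / δ)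

end Cover

/-- The recurring error quantity
`Λ = 2(HR)^{1/3}(ε_S+3ε_F)^{1/3} + √(8ε_S + 12ε_F + 3ε_{F,F})`. -/
def Lam (H : ℕ) (Rmax εS εF εFF : ℝ) : ℝ :=
  2 * ((H : ℝ) * Rmax) ^ ((1 : ℝ) / 3) * (εS + 3 * εF) ^ ((1 : ℝ) / 3) +
    Real.sqrt (8 * εS + 12 * εF + 3 * εFF)

/-- The regularization coefficient `λ = (R / (H²(ε_S+3ε_F)²))^{1/3}`. -/
def lamReg (H : ℕ) (Rmax εS εF : ℝ) : ℝ :=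
  (Rmax / ((H : ℝ) ^ 2 * (εS + 3 * εF) ^ 2)) ^ ((1 : ℝ) / 3)

/-- The learning rate `η = √(log|A| / (2H²R²T))`. -/
def etaReg (H T : ℕ) (Rmax : ℝ) (cardA : ℕ) : ℝ :=
  Real.sqrt (Real.log (cardA : ℝ) / (2 * (H : ℝ) ^ 2 * Rmax ^ 2 * (T : ℝ)))

section Assump

variable [Fintype S] [Fintype A]

/-- `f` is a realizability witness for `Q^π(·,·;r)` at accuracy `ε_F`. -/
def RealizWitness (P : Ker S A) (r : Rew S A) (H : ℕ) (s₀ : S) (εF : ℝ)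
    (π : Pol S A) (f : ℕ → S → A → ℝ) : Prop :=
  ∀ h ∈ Finset.Icc 1 H, ∀ π' : Pol S A, IsPolicy π' →
    occSq P π' s₀ h (fun s a => f h s a - Qfun P π r H h s a) ≤ εF

/-- Assumption: approximate realizability with parameter `ε_F`. -/
def Realizable (P : Ker S A) (Fc : ℕ → Set (S → A → ℝ)) (Rset : Set (Rew S A))
    (H : ℕ) (s₀ : S) (εF : ℝ) : Prop :=
  ∀ r ∈ Rset, ∀ π : Pol S A, IsPolicy π →
    ∃ f, InClass Fc f ∧ RealizWitness P r H s₀ εF π f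

/-- Assumption: approximate completeness with parameter `ε_{F,F}`. -/
def Complete (P : Ker S A) (μ : ℕ → S × A × S → ℝ) (Fc : ℕ → Set (S → A → ℝ))
    (Rset : Set (Rew S A)) (H : ℕ) (εFF : ℝ) : Prop :=
  ∀ h ∈ Finset.Icc 1 H, ∀ r ∈ Rset, ∀ π : Pol S A, IsPolicy π →
    ∀ f' ∈ Fc (h + 1),
      (⨅ g ∈ Fc h, popSq μ h fun s a => g s a - bellman P π r h f' s a) ≤ εFF

end Assump

section Path

variable [Fintype S] [Fintype A]

/-- Distribution over state-action pairs at step `h + m` when following `π` after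
taking action `a` in state `s` at step `h`. -/
def pathDist (P : Ker S A) (π : Pol S A) (h : ℕ) (s : S) (a : A) : ℕ → S → A → ℝ
  | 0 => fun s' a' => if s' = s ∧ a' = a then 1 else 0
  | m + 1 => fun s'' a'' =>
      ∑ s', ∑ a',
        pathDist P π h s a m s' a' * P (h + m) s' a' s'' * π (h + m + 1) s'' a''

end Path

section Loss

variable [Fintype S] [Fintype A]

/-- Sup-norm covering number of a class of real functions, restricted to inputs
satisfying `Ok`. -/
def coverG {Z : Type*} (G : Set (Z → ℝ)) (Ok : Z → Prop) (ε : ℝ) : ℕ :=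
  sInf {N : ℕ | ∃ C : Finset (Z → ℝ), C.card = N ∧
    ∀ g ∈ G, ∃ g' ∈ C, ∀ z, Ok z → |g z - g' z| ≤ ε}

/-- The induced Bellman-loss function `g^π_{f,f'}` on `z = (s, a, ρ, s')`. -/
def lossFun (P : Ker S A) (r : Rew S A) (h : ℕ) (f f' : ℕ → S → A → ℝ)
    (π : Pol S A) : S × A × ℝ × S → ℝ :=
  fun z =>
    (f h z.1 z.2.1 - z.2.2.1 - expA π (h + 1) (f' (h + 1)) z.2.2.2) ^ 2 -
      (bellman P π r h (f' (h + 1)) z.1 z.2.1 - z.2.2.1 -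
        expA π (h + 1) (f' (h + 1)) z.2.2.2) ^ 2

/-- The induced Bellman-loss function class `G_{F,Π}`. -/
def lossClass (P : Ker S A) (r : Rew S A) (h : ℕ) (Fc : ℕ → Set (S → A → ℝ))
    (PiC : Set (Pol S A)) : Set (S × A × ℝ × S → ℝ) :=
  {g | ∃ f f' : ℕ → S → A → ℝ, ∃ π ∈ PiC, InClass Fc f ∧ InClass Fc f' ∧
    g = lossFun P r h f f' π}

end Loss

end VCGRL

/-! Every `g^π_{f,f'}` depends on `(f', π)` only through `V = f'_{h+1}(·, π_{h+1})`, and it is a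
difference `A² - B²` of quantities bounded by `2 H R_max`, so `|A² - Ã²| ≤ 4 H R_max |A - Ã|`.
Cover `F` at scale `ε₁ = εβ / (140 H R_max)` and `Π` at scale `ε₂ = ε₁ / (H R_max)`, and clip the
cover elements back into the a priori bounds (they need not lie in `F` or `Π`). Then `V` is
approximated within `ε₁ + H R_max ε₂ = 2ε₁`, the Bellman target within `2ε₁`, hence `A` within
`3ε₁` and `B` within `4ε₁`, and the loss within `4 H R_max · 7ε₁ = εβ/5`. -/

namespace VCGRL

lemma exists_finset_approx_of_abs_le {X ι : Type*} [Fintype ι] {e : X → ι → ℝ}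
    (he : Function.Surjective e) (M : ℝ) {ε : ℝ} (hε : 0 < ε) :
    ∃ C : Finset X, ∀ x, (∀ i, |e x i| ≤ M) → ∃ y ∈ C, ∀ i, |e y i - e x i| ≤ ε := by
  obtain ⟨t, -, ht, hcover⟩ := finite_cover_balls_of_compact
    (isCompact_univ_pi fun _ : ι => isCompact_Icc (a := -M) (b := M)) hε
  refine ⟨ht.toFinset.image (Function.surjInv he), fun x hx => ?_⟩
  obtain ⟨v, hvt, hxv⟩ := Set.mem_iUnion₂.mp (hcover fun i _ => abs_le.mp (hx i))
  refine ⟨_, Finset.mem_image_of_mem _ (ht.mem_toFinset.mpr hvt), fun i => ?_⟩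
  rw [Function.surjInv_eq he, ← Real.dist_eq, dist_comm]
  exact (dist_le_pi_dist _ _ i).trans (Metric.mem_ball.mp hxv).le

lemma exists_finset_card_eq_sInf {α : Type*} {Q : Finset α → Prop} (h : ∃ C, Q C) :
    ∃ C, C.card = sInf {N | ∃ C : Finset α, C.card = N ∧ Q C} ∧ Q C := by
  obtain ⟨C, hC⟩ := h
  exact Nat.sInf_mem (s := {N | ∃ C : Finset α, C.card = N ∧ Q C}) ⟨C.card, C, rfl, hC⟩

lemma coverG_le_card {Z : Type*} {G : Set (Z → ℝ)} {Ok : Z → Prop} {ε : ℝ}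
    {C : Finset (Z → ℝ)} (hC : ∀ g ∈ G, ∃ g' ∈ C, ∀ z, Ok z → |g z - g' z| ≤ ε) :
    coverG G Ok ε ≤ C.card :=
  Nat.sInf_le ⟨C, rfl, hC⟩

lemma abs_sum_mul_le {ι : Type*} (s : Finset ι) (p q : ι → ℝ) {c : ℝ}
    (hq : ∀ i ∈ s, |q i| ≤ c) : |∑ i ∈ s, p i * q i| ≤ c * ∑ i ∈ s, |p i| :=
  calc |∑ i ∈ s, p i * q i| ≤ ∑ i ∈ s, |p i| * c :=
        (Finset.abs_sum_le_sum_abs _ _).trans <| Finset.sum_le_sum fun i hi => by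
          rw [abs_mul]; exact mul_le_mul_of_nonneg_left (hq i hi) (abs_nonneg _)
    _ = c * ∑ i ∈ s, |p i| := by rw [Finset.mul_sum]; simp only [mul_comm]

lemma abs_sum_mul_le_of_sum_eq_one {ι : Type*} [Fintype ι] {p q : ι → ℝ} {c : ℝ}
    (hp : ∀ i, 0 ≤ p i) (hp1 : ∑ i, p i = 1) (hq : ∀ i, |q i| ≤ c) :
    |∑ i, p i * q i| ≤ c := by
  simpa [abs_of_nonneg (hp _), hp1] using abs_sum_mul_le Finset.univ p q fun i _ => hq i

lemma abs_sq_sub_sq_le {a b M : ℝ} (ha : |a| ≤ M) (hb : |b| ≤ M) :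
    |a ^ 2 - b ^ 2| ≤ 2 * M * |a - b| := by
  rw [sq_sub_sq, abs_mul]
  exact mul_le_mul_of_nonneg_right ((abs_add_le a b).trans (by linarith)) (abs_nonneg _)

def clampAbs (c x : ℝ) : ℝ := max (-c) (min c x)

lemma abs_clampAbs_le {c : ℝ} (hc : 0 ≤ c) (x : ℝ) : |clampAbs c x| ≤ c :=
  abs_le.mpr ⟨le_max_left _ _, max_le (by linarith) (min_le_left _ _)⟩

lemma abs_sub_clampAbs_le {c y : ℝ} (hy : |y| ≤ c) (x : ℝ) :
    |y - clampAbs c x| ≤ |y - x| := by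
  obtain ⟨hy₁, hy₂⟩ := abs_le.mp hy
  calc |y - clampAbs c x| = |max (min c y) (-c) - max (min c x) (-c)| := by
        rw [max_eq_left (le_min (by linarith) hy₁), min_eq_right hy₂, clampAbs, max_comm]
    _ ≤ |min c y - min c x| := abs_max_sub_max_le_abs _ _ _
    _ ≤ |y - x| := by simpa using abs_min_sub_min_le_max c y c x

variable {S A : Type*}

def stepBound (H : ℕ) (R : ℝ) (k : ℕ) : ℝ := ((H : ℝ) - k + 1) * R

lemma stepBound_nonneg {H k : ℕ} {R : ℝ} (hR : 0 ≤ R) (hk : k ≤ H + 1) :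
    0 ≤ stepBound H R k := by
  have : (k : ℝ) ≤ H + 1 := by exact_mod_cast hk
  exact mul_nonneg (by linarith) hR

lemma stepBound_le {H k : ℕ} {R : ℝ} (hR : 0 ≤ R) (hk : 1 ≤ k) :
    stepBound H R k ≤ H * R := by
  have : (1 : ℝ) ≤ k := by exact_mod_cast hk
  exact mul_le_mul_of_nonneg_right (by linarith) hR

lemma stepBound_succ (H : ℕ) (R : ℝ) (k : ℕ) :
    stepBound H R k = stepBound H R (k + 1) + R := by
  simp only [stepBound]; push_cast; ring

lemma stepBound_self_add_one (H : ℕ) (R : ℝ) : stepBound H R (H + 1) = 0 := by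
  simp [stepBound]

lemma ClassBounded.abs_le {H : ℕ} {R : ℝ} {Fc : ℕ → Set (S → A → ℝ)}
    (hFc : ClassBounded H R Fc) {k : ℕ} (hk : k ∈ Finset.Icc 1 (H + 1)) {f : S → A → ℝ}
    (hf : f ∈ Fc k) (s : S) (a : A) : |f s a| ≤ stepBound H R k := by
  obtain ⟨hk₁, hk₂⟩ := Finset.mem_Icc.mp hk
  rcases Nat.lt_or_eq_of_le hk₂ with hkH | rfl
  · exact hFc.1 k (Finset.mem_Icc.mpr ⟨hk₁, Nat.lt_succ_iff.mp hkH⟩) f hf s a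
  · rw [hFc.2, Set.mem_singleton_iff] at hf
    simp [hf, stepBound_self_add_one]

/-- A cover element `g` of `F`, clipped into the a priori bounds of `F`; at step `H + 1` it
becomes `0`, where the cover itself is not controlled. -/
def clampClass (H : ℕ) (R : ℝ) (g : ℕ → S → A → ℝ) (k : ℕ) (s : S) (a : A) : ℝ :=
  clampAbs (stepBound H R k) (g k s a)

lemma abs_sub_clampClass_le {H : ℕ} {R ε : ℝ} {Fc : ℕ → Set (S → A → ℝ)}
    (hFc : ClassBounded H R Fc) (hR : 0 ≤ R) (hε : 0 ≤ ε) {f g : ℕ → S → A → ℝ}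
    (hf : InClass Fc f) (hg : ∀ k ∈ Finset.Icc 1 H, ∀ s a, |g k s a - f k s a| ≤ ε)
    {k : ℕ} (hk : k ∈ Finset.Icc 1 (H + 1)) (s : S) (a : A) :
    |f k s a - clampClass H R g k s a| ≤ ε := by
  obtain ⟨hk₁, hk₂⟩ := Finset.mem_Icc.mp hk
  rcases Nat.lt_or_eq_of_le hk₂ with hkH | rfl
  · refine (abs_sub_clampAbs_le (hFc.abs_le hk (hf k) s a) _).trans ?_
    rw [abs_sub_comm]
    exact hg k (Finset.mem_Icc.mpr ⟨hk₁, Nat.lt_succ_iff.mp hkH⟩) s a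
  · have hf0 := hFc.abs_le hk (hf (H + 1)) s a
    have hg0 := abs_clampAbs_le (stepBound_nonneg (H := H) hR le_rfl) (g (H + 1) s a)
    unfold clampClass
    rw [stepBound_self_add_one] at hf0 hg0 ⊢
    exact (abs_sub _ _).trans (by linarith)

section

variable [Fintype A]

lemma IsPolicy.abs_le_one {π : Pol S A} (hπ : IsPolicy π) (k : ℕ) (s : S) (a : A) :
    |π k s a| ≤ 1 := by
  refine abs_le.mpr ⟨by linarith [hπ.1 k s a], ?_⟩
  rw [← hπ.2 k s]
  exact Finset.single_le_sum (fun a' _ => hπ.1 k s a') (Finset.mem_univ a)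

lemma IsPolicy.abs_expA_le {π : Pol S A} (hπ : IsPolicy π) {g : S → A → ℝ} {c : ℝ}
    (k : ℕ) (s : S) (hg : ∀ a, |g s a| ≤ c) : |expA π k g s| ≤ c :=
  abs_sum_mul_le_of_sum_eq_one (hπ.1 k s) (hπ.2 k s) hg

lemma IsPolicy.abs_expA_sub_expA_le {π : Pol S A} (hπ : IsPolicy π) (π' : Pol S A)
    {g g' : S → A → ℝ} {c δ : ℝ} (k : ℕ) (s : S) (hgg' : ∀ a, |g s a - g' s a| ≤ δ)
    (hg' : ∀ a, |g' s a| ≤ c) :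
    |expA π k g s - expA π' k g' s| ≤ δ + c * ∑ a, |π k s a - π' k s a| := by
  have hsplit : expA π k g s - expA π' k g' s =
      ∑ a, π k s a * (g s a - g' s a) + ∑ a, (π k s a - π' k s a) * g' s a := by
    simp only [expA, ← Finset.sum_sub_distrib, ← Finset.sum_add_distrib]
    exact Finset.sum_congr rfl fun a _ => by ring
  rw [hsplit]
  exact (abs_add_le _ _).trans (add_le_add
    (abs_sum_mul_le_of_sum_eq_one (hπ.1 k s) (hπ.2 k s) hgg')
    (abs_sum_mul_le _ _ _ fun a _ => hg' a))

end

section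

variable [Fintype S]

/-- `lossFun` depends on `f'` and `π` only through the next-step value
`V = f'_{h+1}(·, π_{h+1})`. -/
def valueLoss (P : Ker S A) (r : Rew S A) (h : ℕ) (u : S → A → ℝ) (V : S → ℝ) :
    S × A × ℝ × S → ℝ :=
  fun z =>
    (u z.1 z.2.1 - z.2.2.1 - V z.2.2.2) ^ 2 -
      (r h z.1 z.2.1 + ∑ s', P h z.1 z.2.1 s' * V s' - z.2.2.1 - V z.2.2.2) ^ 2

lemma abs_valueLoss_sub_valueLoss_le {P : Ker S A} (hP : IsKernel P) {r : Rew S A} {h : ℕ}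
    {u u' : S → A → ℝ} {V V' : S → ℝ} {s : S} {a : A} {ρ : ℝ} (s' : S) {M R δ η : ℝ}
    (hr : |r h s a| ≤ R) (hρ : |ρ| ≤ R) (hu : |u s a| ≤ M + R) (hu' : |u' s a| ≤ M + R)
    (hV : ∀ x, |V x| ≤ M) (hV' : ∀ x, |V' x| ≤ M) (hδ : |u s a - u' s a| ≤ δ)
    (hη : ∀ x, |V x - V' x| ≤ η) :
    |valueLoss P r h u V (s, a, ρ, s') - valueLoss P r h u' V' (s, a, ρ, s')| ≤
      4 * (M + R) * (δ + 3 * η) := by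
  have hPavg : ∀ (W : S → ℝ) (c : ℝ), (∀ x, |W x| ≤ c) → |∑ x, P h s a x * W x| ≤ c :=
    fun W c hW => abs_sum_mul_le_of_sum_eq_one (hP.1 h s a) (hP.2 h s a) hW
  set T := r h s a + ∑ x, P h s a x * V x
  set T' := r h s a + ∑ x, P h s a x * V' x
  have hT : |T| ≤ M + R := (abs_add_le _ _).trans (by linarith [hPavg V M hV])
  have hT' : |T'| ≤ M + R := (abs_add_le _ _).trans (by linarith [hPavg V' M hV'])
  have hTT' : |T - T'| ≤ η := by
    have : T - T' = ∑ x, P h s a x * (V x - V' x) := by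
      simp only [T, T', mul_sub, Finset.sum_sub_distrib]; ring
    rw [this]; exact hPavg _ η hη
  have hbound : ∀ {x y z}, |x| ≤ M + R → |y| ≤ R → |z| ≤ M → |x - y - z| ≤ 2 * (M + R) :=
    fun hx hy hz => (abs_sub _ _).trans (by linarith [abs_sub _ _ |>.trans (add_le_add hx hy)])
  have hA := abs_sq_sub_sq_le (hbound hu hρ (hV s')) (hbound hu' hρ (hV' s'))
  have hB := abs_sq_sub_sq_le (hbound hT hρ (hV s')) (hbound hT' hρ (hV' s'))
  have hAA' : |(u s a - ρ - V s') - (u' s a - ρ - V' s')| ≤ δ + η := by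
    rw [show (u s a - ρ - V s') - (u' s a - ρ - V' s') = (u s a - u' s a) - (V s' - V' s') by
      ring]
    exact (abs_sub _ _).trans (add_le_add hδ (hη s'))
  have hBB' : |(T - ρ - V s') - (T' - ρ - V' s')| ≤ 2 * η := by
    rw [show (T - ρ - V s') - (T' - ρ - V' s') = (T - T') - (V s' - V' s') by ring]
    exact (abs_sub _ _).trans (by linarith [hη s'])
  have hMR : 0 ≤ M + R := (abs_nonneg _).trans hu
  calc |valueLoss P r h u V (s, a, ρ, s') - valueLoss P r h u' V' (s, a, ρ, s')|
      = |((u s a - ρ - V s') ^ 2 - (u' s a - ρ - V' s') ^ 2) -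
          ((T - ρ - V s') ^ 2 - (T' - ρ - V' s') ^ 2)| := by
        simp only [valueLoss, T, T']; ring_nf
    _ ≤ 2 * (2 * (M + R)) * (δ + η) + 2 * (2 * (M + R)) * (2 * η) :=
        (abs_sub _ _).trans (add_le_add
          (hA.trans (mul_le_mul_of_nonneg_left hAA' (by positivity)))
          (hB.trans (mul_le_mul_of_nonneg_left hBB' (by positivity))))
    _ = 4 * (M + R) * (δ + 3 * η) := by ring

variable [Fintype A]

lemma exists_finset_approx_on_Icc (H : ℕ) (M : ℝ) {ε : ℝ} (hε : 0 < ε) :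
    ∃ C : Finset (ℕ → S → A → ℝ), ∀ f : ℕ → S → A → ℝ,
      (∀ k ∈ Finset.Icc 1 H, ∀ s a, |f k s a| ≤ M) →
      ∃ g ∈ C, ∀ k ∈ Finset.Icc 1 H, ∀ s a, |g k s a - f k s a| ≤ ε := by
  have hsurj : Function.Surjective
      fun (f : ℕ → S → A → ℝ) (i : Finset.Icc 1 H × S × A) => f i.1 i.2.1 i.2.2 :=
    fun v => ⟨fun k s a => if hk : k ∈ Finset.Icc 1 H then v (⟨k, hk⟩, s, a) else 0,
      funext fun i => dif_pos i.1.2⟩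
  obtain ⟨C, hC⟩ := exists_finset_approx_of_abs_le hsurj M hε
  refine ⟨C, fun f hf => ?_⟩
  obtain ⟨g, hgC, hg⟩ := hC f fun i => hf i.1 i.1.2 i.2.1 i.2.2
  exact ⟨g, hgC, fun k hk s a => hg (⟨k, hk⟩, s, a)⟩

lemma exists_finset_card_eq_coverF {H : ℕ} {R : ℝ} {Fc : ℕ → Set (S → A → ℝ)}
    (hFc : ClassBounded H R Fc) (hR : 0 ≤ R) {ε : ℝ} (hε : 0 < ε) :
    ∃ C : Finset (ℕ → S → A → ℝ), C.card = coverF H Fc ε ∧ ∀ f, InClass Fc f →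
      ∃ g ∈ C, ∀ k ∈ Finset.Icc 1 H, ∀ s a, |g k s a - f k s a| ≤ ε := by
  obtain ⟨C, hC⟩ := exists_finset_approx_on_Icc (S := S) (A := A) H (H * R) hε
  refine exists_finset_card_eq_sInf ⟨C, fun f hf => hC f fun k hk s a => ?_⟩
  exact (hFc.1 k hk (f k) (hf k) s a).trans (stepBound_le hR (Finset.mem_Icc.mp hk).1)

lemma exists_finset_card_eq_coverPol {H : ℕ} {PiC : Set (Pol S A)}
    (hPiC : ∀ π ∈ PiC, IsPolicy π) {ε : ℝ} (hε : 0 < ε) :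
    ∃ C : Finset (Pol S A), C.card = coverPol H PiC ε ∧ ∀ π ∈ PiC, ∃ π' ∈ C,
      ∀ k ∈ Finset.Icc 1 H, ∀ s, ∑ a, |π k s a - π' k s a| ≤ ε := by
  set n : ℝ := (Fintype.card A : ℝ)
  obtain ⟨C, hC⟩ := exists_finset_approx_on_Icc (S := S) (A := A) H 1
    (by positivity : 0 < ε / (n + 1))
  refine exists_finset_card_eq_sInf ⟨C, fun π hπ => ?_⟩
  obtain ⟨π', hπ'C, hπ'⟩ := hC π fun k _ s a => (hPiC π hπ).abs_le_one k s a
  refine ⟨π', hπ'C, fun k hk s => ?_⟩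
  calc ∑ a, |π k s a - π' k s a| ≤ ∑ _a : A, ε / (n + 1) :=
        Finset.sum_le_sum fun a _ => by rw [abs_sub_comm]; exact hπ' k hk s a
    _ = n * ε / (n + 1) := by simp [n, mul_div_assoc]
    _ ≤ ε := by rw [div_le_iff₀ (by positivity)]; linarith

lemma lossFun_eq_valueLoss (P : Ker S A) (r : Rew S A) (h : ℕ) (f f' : ℕ → S → A → ℝ)
    (π : Pol S A) :
    lossFun P r h f f' π = valueLoss P r h (f h) (expA π (h + 1) (f' (h + 1))) :=
  rfl

/-- The element of the cover of `G_{F,Π}` built from cover elements `g, g'` of `F` and `π'` of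
`Π`; the clipping restores the a priori bounds that arbitrary cover elements need not satisfy. -/
def coverLoss (P : Ker S A) (r : Rew S A) (H : ℕ) (R : ℝ) (h : ℕ) (g g' : ℕ → S → A → ℝ)
    (π' : Pol S A) : S × A × ℝ × S → ℝ :=
  valueLoss P r h (clampClass H R g h) fun x =>
    clampAbs (stepBound H R (h + 1)) (expA π' (h + 1) (clampClass H R g' (h + 1)) x)

lemma abs_lossFun_sub_coverLoss_le {P : Ker S A} (hP : IsKernel P) {H : ℕ} {R ε₁ ε₂ : ℝ}
    {Fc : ℕ → Set (S → A → ℝ)} (hFc : ClassBounded H R Fc) (hR : 0 ≤ R) (hε₁ : 0 ≤ ε₁)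
    {r : Rew S A} {h : ℕ} (hh : h ∈ Finset.Icc 1 H) {f f' g g' : ℕ → S → A → ℝ}
    {π π' : Pol S A} (hf : InClass Fc f) (hf' : InClass Fc f') (hπ : IsPolicy π)
    (hg : ∀ k ∈ Finset.Icc 1 H, ∀ s a, |g k s a - f k s a| ≤ ε₁)
    (hg' : ∀ k ∈ Finset.Icc 1 H, ∀ s a, |g' k s a - f' k s a| ≤ ε₁)
    (hππ' : ∀ k ∈ Finset.Icc 1 H, ∀ s, ∑ a, |π k s a - π' k s a| ≤ ε₂)
    {s : S} {a : A} {ρ : ℝ} (s' : S) (hr : |r h s a| ≤ R) (hρ : |ρ| ≤ R) :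
    |lossFun P r h f f' π (s, a, ρ, s') - coverLoss P r H R h g g' π' (s, a, ρ, s')| ≤
      4 * stepBound H R h * (ε₁ + 3 * (ε₁ + stepBound H R (h + 1) * ε₂)) := by
  obtain ⟨hh₁, hhH⟩ := Finset.mem_Icc.mp hh
  have hk : h ∈ Finset.Icc 1 (H + 1) := Finset.mem_Icc.mpr ⟨hh₁, by omega⟩
  have hk' : h + 1 ∈ Finset.Icc 1 (H + 1) := Finset.mem_Icc.mpr ⟨by omega, by omega⟩
  set M := stepBound H R (h + 1)
  have hM : 0 ≤ M := stepBound_nonneg hR (by omega)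
  have hu := hFc.abs_le hk (hf h) s a
  have hu' : |clampClass H R g h s a| ≤ stepBound H R h :=
    abs_clampAbs_le (stepBound_nonneg hR (by omega)) _
  rw [stepBound_succ H R h] at hu hu' ⊢
  have hV : ∀ x, |expA π (h + 1) (f' (h + 1)) x| ≤ M :=
    fun x => hπ.abs_expA_le _ x fun a => hFc.abs_le hk' (hf' _) x a
  have hmix : ∀ x, M * ∑ a, |π (h + 1) x a - π' (h + 1) x a| ≤ M * ε₂ := by
    rcases Nat.lt_or_ge h H with hlt | hge
    · exact fun x => mul_le_mul_of_nonneg_left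
        (hππ' _ (Finset.mem_Icc.mpr ⟨by omega, hlt⟩) x) hM
    · obtain rfl : h = H := by omega
      simp [M, stepBound_self_add_one]
  rw [lossFun_eq_valueLoss]
  refine abs_valueLoss_sub_valueLoss_le hP s' hr hρ hu hu' hV
    (fun x => abs_clampAbs_le hM _) (abs_sub_clampClass_le hFc hR hε₁ hf hg hk s a)
    fun x => (abs_sub_clampAbs_le (hV x) _).trans ?_
  refine (hπ.abs_expA_sub_expA_le π' (h + 1) x
    (fun a => abs_sub_clampClass_le hFc hR hε₁ hf' hg' hk' x a)
    (fun a => abs_clampAbs_le hM _)).trans ?_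
  linarith [hmix x]

lemma coverG_lossClass_le {P : Ker S A} (hP : IsKernel P) {H : ℕ} {R : ℝ}
    {Fc : ℕ → Set (S → A → ℝ)} (hFc : ClassBounded H R Fc) (hR : 0 ≤ R)
    {PiC : Set (Pol S A)} (hPiC : ∀ π ∈ PiC, IsPolicy π) {r : Rew S A} {h : ℕ}
    (hh : h ∈ Finset.Icc 1 H) (hr : ∀ s a, |r h s a| ≤ R) {ε₁ ε₂ ε : ℝ} (hε₁ : 0 ≤ ε₁)
    (hε : 4 * stepBound H R h * (ε₁ + 3 * (ε₁ + stepBound H R (h + 1) * ε₂)) ≤ ε)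
    {CF : Finset (ℕ → S → A → ℝ)} {CP : Finset (Pol S A)}
    (hCF : ∀ f, InClass Fc f → ∃ g ∈ CF, ∀ k ∈ Finset.Icc 1 H, ∀ s a, |g k s a - f k s a| ≤ ε₁)
    (hCP : ∀ π ∈ PiC, ∃ π' ∈ CP, ∀ k ∈ Finset.Icc 1 H, ∀ s, ∑ a, |π k s a - π' k s a| ≤ ε₂) :
    coverG (lossClass P r h Fc PiC) (fun z => |z.2.2.1| ≤ R) ε ≤ CF.card ^ 2 * CP.card := by
  calc coverG (lossClass P r h Fc PiC) (fun z => |z.2.2.1| ≤ R) ε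
      ≤ ((CF ×ˢ CF ×ˢ CP).image fun p => coverLoss P r H R h p.1 p.2.1 p.2.2).card := by
        refine coverG_le_card ?_
        rintro _ ⟨f, f', π, hπ, hf, hf', rfl⟩
        obtain ⟨g, hgC, hg⟩ := hCF f hf
        obtain ⟨g', hg'C, hg'⟩ := hCF f' hf'
        obtain ⟨π', hπ'C, hπ'⟩ := hCP π hπ
        refine ⟨_, Finset.mem_image.mpr ⟨(g, g', π'), by simp [hgC, hg'C, hπ'C], rfl⟩, ?_⟩
        rintro ⟨s, a, ρ, s'⟩ hρ
        exact (abs_lossFun_sub_coverLoss_le hP hFc hR hε₁ hh hf hf' (hPiC π hπ) hg hg' hπ' s'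
          (hr s a) hρ).trans hε
    _ ≤ (CF ×ˢ CF ×ˢ CP).card := Finset.card_image_le
    _ = CF.card ^ 2 * CP.card := by rw [Finset.card_product, Finset.card_product]; ring

end

end VCGRL

open VCGRL in
theorem stmt19_general
    {S A : Type*} [Fintype S] [Fintype A]
    (H : ℕ) (Rmax : ℝ) (hRmax : 0 < Rmax)
    (P : Ker S A) (hP : IsKernel P)
    (Fc : ℕ → Set (S → A → ℝ)) (hFc : ClassBounded H Rmax Fc)
    (PiC : Set (Pol S A)) (hPiC : ∀ π ∈ PiC, IsPolicy π)
    (h : ℕ) (hh : h ∈ Finset.Icc 1 H)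
    (r : Rew S A) (hr : ∀ h' ∈ Finset.Icc 1 H, ∀ s a, |r h' s a| ≤ Rmax)
    (ε β : ℝ) (hε : 0 < ε) (hβ : 0 < β) :
    coverG (lossClass P r h Fc PiC) (fun z => |z.2.2.1| ≤ Rmax) (ε * β / 5) ≤
      (coverF H Fc (ε * β / (140 * H * Rmax))) ^ 2 *
        coverPol H PiC (ε * β / (140 * (H : ℝ) ^ 2 * Rmax ^ 2)) := by
  set ε₁ := ε * β / (140 * H * Rmax)
  set ε₂ := ε * β / (140 * (H : ℝ) ^ 2 * Rmax ^ 2)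
  obtain ⟨hh₁, hhH⟩ := Finset.mem_Icc.mp hh
  have hHpos : (0 : ℝ) < H := by exact_mod_cast hh₁.trans hhH
  have hε₁ : 0 < ε₁ := by positivity
  have hε₂ : 0 < ε₂ := by positivity
  have hbudget : 4 * stepBound H Rmax h * (ε₁ + 3 * (ε₁ + stepBound H Rmax (h + 1) * ε₂)) ≤
      ε * β / 5 := by
    have hM₀ : stepBound H Rmax h ≤ H * Rmax := stepBound_le hRmax.le hh₁
    have hM₁ : stepBound H Rmax (h + 1) ≤ H * Rmax := stepBound_le hRmax.le (by omega)
    have hM₁' : 0 ≤ stepBound H Rmax (h + 1) * ε₂ :=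
      mul_nonneg (stepBound_nonneg hRmax.le (by omega)) hε₂.le
    calc _ ≤ 4 * (H * Rmax) * (ε₁ + 3 * (ε₁ + H * Rmax * ε₂)) := by gcongr
      _ = ε * β / 5 := by simp only [ε₁, ε₂]; field_simp; ring
  obtain ⟨CF, hCFcard, hCF⟩ := exists_finset_card_eq_coverF hFc hRmax.le hε₁
  obtain ⟨CP, hCPcard, hCP⟩ := exists_finset_card_eq_coverPol (H := H) hPiC hε₂
  rw [← hCFcard, ← hCPcard]
  exact coverG_lossClass_le hP hFc hRmax.le hPiC hh (hr h hh) hε₁.le hbudget hCF hCP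

open VCGRL in
/-- **Statement 19: covering-number bound for the induced Bellman-loss function
class `G_{F,Π}`.** -/
theorem stmt19
    {S A : Type*} [Fintype S] [Fintype A] [Nonempty S] [Nonempty A]
    (H : ℕ) (Rmax : ℝ) (hRmax : 0 < Rmax) (hH : 1 ≤ H)
    (P : Ker S A) (hP : IsKernel P)
    (Fc : ℕ → Set (S → A → ℝ)) (hFc : ClassBounded H Rmax Fc)
    (PiC : Set (Pol S A)) (hPiC : ∀ π ∈ PiC, IsPolicy π)
    (h : ℕ) (hh : h ∈ Finset.Icc 1 H)
    (r : Rew S A) (hr : ∀ h' ∈ Finset.Icc 1 H, ∀ s a, |r h' s a| ≤ Rmax)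
    (ε β : ℝ) (hε : 0 < ε) (hβ : 0 < β) :
    coverG (lossClass P r h Fc PiC) (fun z => |z.2.2.1| ≤ Rmax) (ε * β / 5) ≤
      (coverF H Fc (ε * β / (140 * H * Rmax))) ^ 2 *
        coverPol H PiC (ε * β / (140 * (H : ℝ) ^ 2 * Rmax ^ 2)) :=
  stmt19_general H Rmax hRmax P hP Fc hFc PiC hPiC h hh r hr ε β hε hβ
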